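/- Let X be a Polish topological vector space and let c(x₁, x₂) = h(x₁ − x₂) be a translation invariant cost function on X, where h : X → [0,∞]. Then for any probability measures μ, ν, and κ on X, the optimal transport costs satisfy both T_c(μ * κ, ν * κ) ≤ T_c(μ, ν) and T_c(μ, μ * κ) ≤ ∫ h dκ. -/

import Mathlib

open MeasureTheory ENNReal Filter Topology

/-- The optimal transport cost between two measures `μ` and `ν` on a space `Z`
with base cost `c`. -/
noncomputable def otCost {Z : Type*} [MeasurableSpace Z]
    (c : Z → Z → ℝ≥0∞) (μ ν : Measure Z) : ℝ≥0∞ :=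
  ⨅ (π : Measure (Z × Z)) (_ : π.map Prod.fst = μ ∧ π.map Prod.snd = ν),
    ∫⁻ p, c p.1 p.2 ∂π

/-- The convolution of two measures on a topological vector space:
the law of the sum of independent random variables with laws `μ` and `κ`. -/
noncomputable def mconv {Z : Type*} [MeasurableSpace Z] [Add Z]
    (μ κ : Measure Z) : Measure Z :=
  (μ.prod κ).map fun q => q.1 + q.2

/-!
If `π` couples `μ` and `ν` and `Z ∼ κ` is independent of `(X, Y) ∼ π`, then `(X + Z, Y + Z)`
couples `μ * κ` and `ν * κ`, and by translation invariance it has the same cost as `π`.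
Likewise `(X, X + Z)` with `X ∼ μ` couples `μ` and `μ * κ` at cost `𝔼 h(-Z) = 𝔼 h(Z)`.
-/

lemma otCost_le_lintegral {Z : Type*} [MeasurableSpace Z] (c : Z → Z → ℝ≥0∞)
    {μ ν : Measure Z} {π : Measure (Z × Z)} (hπμ : π.map Prod.fst = μ)
    (hπν : π.map Prod.snd = ν) : otCost c μ ν ≤ ∫⁻ p, c p.1 p.2 ∂π :=
  iInf₂_le π ⟨hπμ, hπν⟩

section Product

variable {α β : Type*} [MeasurableSpace α] [MeasurableSpace β]

lemma lintegral_comp_fst_prod_le (f : α → ℝ≥0∞) (μ : Measure α) (ν : Measure β)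
    [IsProbabilityMeasure ν] : ∫⁻ q, f q.1 ∂μ.prod ν ≤ ∫⁻ x, f x ∂μ :=
  calc ∫⁻ q, f q.1 ∂μ.prod ν ≤ ∫⁻ x, ∫⁻ _, f x ∂ν ∂μ := lintegral_prod_le _
    _ = ∫⁻ x, f x ∂μ := by simp only [lintegral_const, measure_univ, mul_one]

lemma lintegral_comp_snd_prod_le (f : β → ℝ≥0∞) (μ : Measure α) (ν : Measure β)
    [IsProbabilityMeasure μ] : ∫⁻ q, f q.2 ∂μ.prod ν ≤ ∫⁻ y, f y ∂ν :=
  calc ∫⁻ q, f q.2 ∂μ.prod ν ≤ ∫⁻ _, ∫⁻ y, f y ∂ν ∂μ := lintegral_prod_le _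
    _ = ∫⁻ y, f y ∂ν := by simp only [lintegral_const, measure_univ, mul_one]

end Product

section Convolution

variable {X : Type*} [MeasurableSpace X] [Add X] [MeasurableAdd₂ X]

lemma mconv_map_left {α : Type*} [MeasurableSpace α] (π : Measure α) (κ : Measure X)
    [SFinite π] [SFinite κ] {f : α → X} (hf : Measurable f) :
    mconv (π.map f) κ = (π.prod κ).map fun q => f q.1 + q.2 := by
  conv_lhs => rw [mconv, ← Measure.map_id (μ := κ), Measure.map_prod_map π κ hf measurable_id]
  rw [Measure.map_map (by fun_prop) (by fun_prop)]
  rfl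

theorem otCost_mconv_le_otCost (c : X → X → ℝ≥0∞) (hc : ∀ x y z, c (x + z) (y + z) = c x y)
    (μ ν κ : Measure X) [IsFiniteMeasure μ] [IsProbabilityMeasure κ] :
    otCost c (mconv μ κ) (mconv ν κ) ≤ otCost c μ ν := by
  refine le_iInf₂ fun π ⟨hπμ, hπν⟩ => ?_
  have : IsFiniteMeasure (π.map Prod.fst) := hπμ ▸ inferInstance
  have : IsFiniteMeasure π := Measure.isFiniteMeasure_of_map measurable_fst.aemeasurable
  set shift : (X × X) × X → X × X := fun q => (q.1.1 + q.2, q.1.2 + q.2)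
  have hshift : Measurable shift := by fun_prop
  have hμ : ((π.prod κ).map shift).map Prod.fst = mconv μ κ := by
    rw [Measure.map_map measurable_fst hshift, ← hπμ, mconv_map_left π κ measurable_fst]
    rfl
  have hν : ((π.prod κ).map shift).map Prod.snd = mconv ν κ := by
    rw [Measure.map_map measurable_snd hshift, ← hπν, mconv_map_left π κ measurable_snd]
    rfl
  calc otCost c (mconv μ κ) (mconv ν κ) ≤ ∫⁻ p, c p.1 p.2 ∂(π.prod κ).map shift :=
        otCost_le_lintegral c hμ hν
    _ ≤ ∫⁻ q, c (q.1.1 + q.2) (q.1.2 + q.2) ∂π.prod κ := lintegral_map_le _ _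
    _ = ∫⁻ q, c q.1.1 q.1.2 ∂π.prod κ := by simp only [hc]
    _ ≤ ∫⁻ p, c p.1 p.2 ∂π := lintegral_comp_fst_prod_le (fun p => c p.1 p.2) π κ

theorem otCost_self_mconv_le (c : X → X → ℝ≥0∞) (h : X → ℝ≥0∞)
    (hc : ∀ x z, c x (x + z) = h z) (μ κ : Measure X)
    [IsProbabilityMeasure μ] [IsProbabilityMeasure κ] :
    otCost c μ (mconv μ κ) ≤ ∫⁻ z, h z ∂κ := by
  set graph : X × X → X × X := fun q => (q.1, q.1 + q.2)
  have hgraph : Measurable graph := by fun_prop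
  have hμ : ((μ.prod κ).map graph).map Prod.fst = μ := by
    rw [Measure.map_map measurable_fst hgraph]
    simp only [graph, Function.comp_def, Measure.map_fst_prod, measure_univ, one_smul]
  have hconv : ((μ.prod κ).map graph).map Prod.snd = mconv μ κ := by
    rw [Measure.map_map measurable_snd hgraph]
    rfl
  calc otCost c μ (mconv μ κ) ≤ ∫⁻ p, c p.1 p.2 ∂(μ.prod κ).map graph :=
        otCost_le_lintegral c hμ hconv
    _ ≤ ∫⁻ q, c q.1 (q.1 + q.2) ∂μ.prod κ := lintegral_map_le _ _
    _ = ∫⁻ q, h q.2 ∂μ.prod κ := by simp only [hc]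
    _ ≤ ∫⁻ z, h z ∂κ := lintegral_comp_snd_prod_le h μ κ

end Convolution

theorem otCost_conv_le_general
    {X : Type*} [AddCommGroup X] [TopologicalSpace X]
    [IsTopologicalAddGroup X] [PolishSpace X]
    [MeasurableSpace X] [BorelSpace X]
    (h : X → ℝ≥0∞)
    (c : X → X → ℝ≥0∞) (hch : ∀ x₁ x₂, c x₁ x₂ = h (x₁ - x₂))
    (hc_symm : ∀ x₁ x₂, c x₁ x₂ = c x₂ x₁)
    (μ ν κ : Measure X)
    [IsProbabilityMeasure μ] [IsProbabilityMeasure κ] :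
    otCost c (mconv μ κ) (mconv ν κ) ≤ otCost c μ ν ∧
      otCost c μ (mconv μ κ) ≤ ∫⁻ x, h x ∂κ :=
  ⟨otCost_mconv_le_otCost c (fun x y z => by rw [hch, hch, add_sub_add_right_eq_sub]) μ ν κ,
    otCost_self_mconv_le c h (fun x z => by rw [hc_symm, hch, add_sub_cancel_left]) μ κ⟩

/-- For a translation invariant cost `c(x₁, x₂) = h(x₁ − x₂)` on a
Polish topological vector space `X` and probability measures `μ`, `ν`, `κ` on `X`:
`T_c(μ * κ, ν * κ) ≤ T_c(μ, ν)` and `T_c(μ, μ * κ) ≤ ∫ h dκ`. -/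
theorem otCost_conv_le
    {X : Type*} [AddCommGroup X] [Module ℝ X] [TopologicalSpace X]
    [IsTopologicalAddGroup X] [ContinuousSMul ℝ X] [PolishSpace X]
    [MeasurableSpace X] [BorelSpace X]
    (h : X → ℝ≥0∞)
    (c : X → X → ℝ≥0∞) (hch : ∀ x₁ x₂, c x₁ x₂ = h (x₁ - x₂))
    (hc_lsc : LowerSemicontinuous (Function.uncurry c))
    (hc_symm : ∀ x₁ x₂, c x₁ x₂ = c x₂ x₁)
    (hc_diag : ∀ x, c x x = 0)
    (μ ν κ : Measure X)
    [IsProbabilityMeasure μ] [IsProbabilityMeasure ν] [IsProbabilityMeasure κ] :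
    otCost c (mconv μ κ) (mconv ν κ) ≤ otCost c μ ν ∧
      otCost c μ (mconv μ κ) ≤ ∫⁻ x, h x ∂κ :=
  otCost_conv_le_general h c hch hc_symm μ ν κ
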